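/- The rook polynomials R_n(t) of the boards associated with forbidden set S = {0,1} (cells (i,i) and (i,i+1) in an n×n grid) satisfy R_n(t) = (1+2t)R_{n-1}(t) - t² R_{n-2}(t) for n ≥ 3, with R_1(t) = 1+t and R_2(t) = 1+3t+t². -/

import Mathlib

/-- No two cells of `T` share a row or a column. -/
def NonAttacking (T : Finset (ℕ × ℕ)) : Prop :=
  ∀ c ∈ T, ∀ d ∈ T, c ≠ d → c.1 ≠ d.1 ∧ c.2 ≠ d.2

/-- The number of non-attacking placements of `k` rooks on the board `B`. -/
noncomputable def rookCount (B : Finset (ℕ × ℕ)) (k : ℕ) : ℕ :=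
  Nat.card {T : Finset (ℕ × ℕ) // T ⊆ B ∧ T.card = k ∧ NonAttacking T}

/-- The board for the forbidden set S = {0,1}: cells (i,i) for 1 ≤ i ≤ n
and (i,i+1) for 1 ≤ i ≤ n-1, inside the n×n grid. -/
def straightBoard (n : ℕ) : Finset (ℕ × ℕ) :=
  ((Finset.Icc 1 n).image fun i => (i, i)) ∪
    ((Finset.Icc 1 (n - 1)).image fun i => (i, i + 1))

open Polynomial in
/-- The rook polynomial of the board. -/
noncomputable def rookPoly (n : ℕ) : Polynomial ℚ :=
  ∑ k ∈ Finset.range (n + 1), (rookCount (straightBoard n) k : ℚ) • X ^ k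

/-!
Number the cells of the board along the staircase (1,1), (1,2), (2,2), (2,3), …, that is by
(i, j) ↦ i + j - 2. Two distinct cells share a row or a column exactly when their numbers are
consecutive, so the non-attacking placements on the n-th board are the subsets of {0, …, 2n-2}
without two consecutive elements, and R_n = I_{2n-1}, where I_m is the independence polynomial
of the path on m vertices. Splitting on whether the last vertex is used gives
I_{m+2} = I_{m+1} + t I_m, and two applications of this yield
I_{m+4} = (1 + 2t) I_{m+2} - t² I_m.
-/

open Finset Polynomial

def NoConsecutive (S : Finset ℕ) : Prop := ∀ a ∈ S, a + 1 ∉ S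

instance : DecidablePred NoConsecutive := fun S =>
  inferInstanceAs (Decidable (∀ a ∈ S, a + 1 ∉ S))

instance : DecidablePred NonAttacking := fun T =>
  inferInstanceAs (Decidable (∀ c ∈ T, ∀ d ∈ T, c ≠ d → c.1 ≠ d.1 ∧ c.2 ≠ d.2))

lemma noConsecutive_insert_iff {m : ℕ} {S : Finset ℕ} (hS : S ⊆ range m) :
    NoConsecutive (insert (m + 1) S) ↔ NoConsecutive S := by
  have hlt : ∀ a ∈ S, a < m := fun a ha => mem_range.1 (hS ha)
  refine ⟨fun h a ha => ?_, fun h a ha => ?_⟩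
  · exact fun ha' => h a (mem_insert_of_mem ha) (mem_insert_of_mem ha')
  · rcases mem_insert.1 ha with rfl | ha
    · grind
    · grind [h a ha]

lemma not_noConsecutive_insert_insert (m : ℕ) (S : Finset ℕ) :
    ¬ NoConsecutive (insert (m + 1) (insert m S)) :=
  fun h => h m (by simp) (by simp)

section PathIndepPoly

variable (R : Type*) [CommSemiring R]

noncomputable def pathIndepPoly (m : ℕ) : R[X] :=
  ∑ S ∈ (range m).powerset with NoConsecutive S, X ^ #S

lemma pathIndepPoly_zero : pathIndepPoly R 0 = 1 := by
  rw [pathIndepPoly, show (range 0).powerset.filter NoConsecutive = {∅} by decide, sum_singleton,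
    card_empty, pow_zero]

lemma pathIndepPoly_one : pathIndepPoly R 1 = 1 + X := by
  rw [pathIndepPoly, show (range 1).powerset.filter NoConsecutive = {∅, {0}} by decide,
    sum_pair (by decide), card_empty, card_singleton, pow_zero, pow_one]

lemma pathIndepPoly_add_two (m : ℕ) :
    pathIndepPoly R (m + 2) = pathIndepPoly R (m + 1) + X * pathIndepPoly R m := by
  simp only [pathIndepPoly, sum_filter]
  rw [range_add_one (n := m + 1), sum_powerset_insert (by simp)]
  congr 1
  rw [range_add_one (n := m), sum_powerset_insert (by simp),
    sum_eq_zero fun S _ => if_neg (not_noConsecutive_insert_insert m S), add_zero, mul_sum]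
  refine sum_congr rfl fun S hS => ?_
  rw [mem_powerset] at hS
  rw [if_congr (noConsecutive_insert_iff hS) rfl rfl,
    card_insert_of_notMem fun h => by simpa using hS h, pow_succ', mul_ite, mul_zero]

lemma pathIndepPoly_three : pathIndepPoly R 3 = 1 + 3 * X + X ^ 2 := by
  rw [pathIndepPoly_add_two, pathIndepPoly_add_two, pathIndepPoly_one, pathIndepPoly_zero]
  ring

end PathIndepPoly

lemma pathIndepPoly_add_four (R : Type*) [CommRing R] (m : ℕ) :
    pathIndepPoly R (m + 4) =
      (1 + 2 * X) * pathIndepPoly R (m + 2) - X ^ 2 * pathIndepPoly R m := by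
  have h4 : pathIndepPoly R (m + 4) = pathIndepPoly R (m + 3) + X * pathIndepPoly R (m + 2) :=
    pathIndepPoly_add_two R (m + 2)
  have h3 : pathIndepPoly R (m + 3) = pathIndepPoly R (m + 2) + X * pathIndepPoly R (m + 1) :=
    pathIndepPoly_add_two R (m + 1)
  linear_combination h4 + h3 - X * pathIndepPoly_add_two R m

lemma rookCount_eq_card_filter (B : Finset (ℕ × ℕ)) (k : ℕ) :
    rookCount B k = #{T ∈ B.powerset.filter NonAttacking | #T = k} := by
  rw [rookCount, ← Nat.card_eq_finsetCard]
  exact Nat.card_congr <| Equiv.subtypeEquivRight fun T => by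
    simp only [mem_filter, mem_powerset]
    tauto

lemma sum_rookCount_smul_X_pow {R : Type*} [CommSemiring R] (B : Finset (ℕ × ℕ)) {N : ℕ}
    (hN : ∀ T ⊆ B, NonAttacking T → #T ≤ N) :
    ∑ k ∈ range (N + 1), (rookCount B k : R) • X ^ k =
      ∑ T ∈ B.powerset.filter NonAttacking, (X : R[X]) ^ #T := by
  rw [← sum_fiberwise_of_maps_to (g := card) (t := range (N + 1)) fun T hT => by
    rw [mem_filter, mem_powerset] at hT
    exact mem_range.2 (Nat.lt_succ_of_le (hN T hT.1 hT.2))]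
  refine sum_congr rfl fun k _ => ?_
  rw [rookCount_eq_card_filter, sum_congr rfl fun T hT => by rw [(mem_filter.1 hT).2], sum_const,
    Nat.cast_smul_eq_nsmul]

structure IsPathLabeling (B : Finset (ℕ × ℕ)) (m : ℕ) (e : ℕ × ℕ → ℕ) : Prop where
  injOn : Set.InjOn e B
  image_eq : B.image e = range m
  attacks_iff : ∀ c ∈ B, ∀ d ∈ B, c ≠ d →
    (c.1 = d.1 ∨ c.2 = d.2 ↔ e c + 1 = e d ∨ e d + 1 = e c)

namespace IsPathLabeling

variable {B : Finset (ℕ × ℕ)} {m : ℕ} {e : ℕ × ℕ → ℕ}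

lemma noConsecutive_image_iff (he : IsPathLabeling B m e) {T : Finset (ℕ × ℕ)} (hT : T ⊆ B) :
    NoConsecutive (T.image e) ↔ NonAttacking T := by
  simp only [NoConsecutive, forall_mem_image]
  simp only [mem_image, not_exists, not_and]
  refine ⟨fun h c hc d hd hne => ?_, fun h c hc d hd hdc => ?_⟩
  · have := (he.attacks_iff c (hT hc) d (hT hd) hne).not.2 <| by
      rintro (hcd | hdc)
      exacts [h hc d hd hcd.symm, h hd c hc hdc.symm]
    tauto
  · have hne : c ≠ d := by rintro rfl; omega
    have := (he.attacks_iff c (hT hc) d (hT hd) hne).2 (Or.inl hdc.symm)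
    have := h c hc d hd hne
    tauto

lemma sum_nonAttacking_eq_pathIndepPoly (R : Type*) [CommSemiring R]
    (he : IsPathLabeling B m e) :
    ∑ T ∈ B.powerset.filter NonAttacking, (X : R[X]) ^ #T = pathIndepPoly R m := by
  rw [pathIndepPoly, ← he.image_eq, powerset_image, filter_image,
    sum_image ((image_injOn_powerset_of_injOn he.injOn).mono (coe_subset.2 (filter_subset _ _)))]
  refine sum_congr ?_ fun T hT => ?_
  · ext T
    simp only [mem_filter, mem_powerset]
    exact and_congr_right fun hT => (he.noConsecutive_image_iff hT).symm
  · rw [card_image_of_injOn (he.injOn.mono (mem_powerset.1 (mem_filter.1 hT).1))]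

end IsPathLabeling

lemma mem_straightBoard {n : ℕ} {c : ℕ × ℕ} :
    c ∈ straightBoard n ↔ (c.2 = c.1 ∨ c.2 = c.1 + 1) ∧ 1 ≤ c.1 ∧ c.2 ≤ n := by
  obtain ⟨a, b⟩ := c
  simp only [straightBoard, mem_union, mem_image, mem_Icc, Prod.mk.injEq]
  constructor
  · rintro (⟨i, hi, rfl, rfl⟩ | ⟨i, hi, rfl, rfl⟩) <;> omega
  · rintro ⟨hb | hb, h1, h2⟩
    exacts [Or.inl ⟨a, by omega, rfl, hb.symm⟩, Or.inr ⟨a, by omega, rfl, hb.symm⟩]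

lemma isPathLabeling_straightBoard (n : ℕ) :
    IsPathLabeling (straightBoard n) (2 * n - 1) fun c => c.1 + c.2 - 2 where
  injOn c hc d hd h := by
    rw [mem_coe, mem_straightBoard] at hc hd
    dsimp only at h
    ext <;> omega
  image_eq := by
    ext j
    simp only [mem_image, mem_range, mem_straightBoard]
    constructor
    · rintro ⟨c, hc, rfl⟩
      omega
    · exact fun hj => ⟨(j / 2 + 1, (j + 1) / 2 + 1), by omega, by omega⟩
  attacks_iff c hc d hd hne := by
    rw [mem_straightBoard] at hc hd
    have : c.1 ≠ d.1 ∨ c.2 ≠ d.2 := by contrapose! hne; exact Prod.ext hne.1 hne.2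
    omega

lemma card_le_of_nonAttacking_subset_straightBoard {n : ℕ} {T : Finset (ℕ × ℕ)}
    (hT : T ⊆ straightBoard n) (hna : NonAttacking T) : #T ≤ n := by
  calc #T ≤ #(Icc 1 n) := card_le_card_of_injOn Prod.fst
        (fun c hc => by have := mem_straightBoard.1 (hT hc); simp; omega)
        (fun c hc d hd h => by_contra fun hne => (hna c hc d hd hne).1 h)
    _ = n := by simp

lemma rookPoly_eq_pathIndepPoly (n : ℕ) : rookPoly n = pathIndepPoly ℚ (2 * n - 1) := by
  rw [rookPoly, sum_rookCount_smul_X_pow _ fun _ => card_le_of_nonAttacking_subset_straightBoard,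
    (isPathLabeling_straightBoard n).sum_nonAttacking_eq_pathIndepPoly ℚ]

open Polynomial in
theorem rookPoly_recurrence :
    (∀ n, 3 ≤ n →
        rookPoly n = (1 + 2 * X) * rookPoly (n - 1) - X ^ 2 * rookPoly (n - 2)) ∧
      rookPoly 1 = 1 + X ∧ rookPoly 2 = 1 + 3 * X + X ^ 2 := by
  simp only [rookPoly_eq_pathIndepPoly]
  refine ⟨fun n hn => ?_, pathIndepPoly_one ℚ, pathIndepPoly_three ℚ⟩
  obtain ⟨m, rfl⟩ : ∃ m, n = m + 3 := ⟨n - 3, by omega⟩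
  rw [show 2 * (m + 3) - 1 = 2 * m + 1 + 4 by omega,
    show 2 * (m + 3 - 1) - 1 = 2 * m + 1 + 2 by omega,
    show 2 * (m + 3 - 2) - 1 = 2 * m + 1 by omega]
  exact pathIndepPoly_add_four ℚ _
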